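/- Let g(x) = 2·2^x·(x+9) and define the two-parameter tower function by Tower(0,x) = x and Tower(i+1,x) = 2^{Tower(i,x)}. Then for every integer x ≥ 5 and every integer i ≥ 1, the i-fold iterate satisfies g^{(i)}(x) < Tower(i+1, x)/2. -/
import Mathlib


namespace PaperFO

/-- The function `g(x) = 2 · 2^x · (x + 9)`. -/
def gfun (x : ℕ) : ℕ := 2 * 2 ^ x * (x + 9)

/-- The two-parameter tower function: `Tower(0,x) = x`,
`Tower(i+1,x) = 2^{Tower(i,x)}`. -/
def tower2 : ℕ → ℕ → ℕ
  | 0, x => x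
  | i + 1, x => 2 ^ tower2 i x

lemma key (y : ℕ) (hy : 5 ≤ y) : 2 * y + 10 ≤ 2 ^ y := by
  induction y with
  | zero => omega
  | succ n ih =>
    rcases Nat.lt_or_ge n 5 with h | h
    · have : n = 4 := by omega
      subst this; norm_num
    · have := ih h
      rw [pow_succ]; omega

lemma g_lt (y : ℕ) (hy : 5 ≤ y) : gfun y < 2 ^ (2 * y + 1) := by
  have h := key y hy
  have hg : gfun y = 2 ^ (y + 1) * (y + 9) := by unfold gfun; ring
  rw [hg]
  calc 2 ^ (y + 1) * (y + 9) < 2 ^ (y + 1) * 2 ^ y :=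
        by
        have hp : (0:ℕ) < 2 ^ (y + 1) := by positivity
        exact (Nat.mul_lt_mul_left hp).mpr (by omega)
    _ = 2 ^ (2 * y + 1) := by ring

lemma le_g (y : ℕ) : y ≤ gfun y := by
  have : (1:ℕ) ≤ 2 ^ y := Nat.one_le_two_pow
  unfold gfun; nlinarith

lemma iter_ge (x : ℕ) (hx : 5 ≤ x) (i : ℕ) : 5 ≤ gfun^[i] x := by
  induction i with
  | zero => simpa using hx
  | succ n ih =>
    rw [Function.iterate_succ_apply']
    exact le_trans ih (le_g _)

lemma pow_div_two (t : ℕ) (ht : 1 ≤ t) : 2 ^ t / 2 = 2 ^ (t - 1) := by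
  have : 2 ^ t = 2 ^ (t - 1) * 2 := by
    rw [← pow_succ]; congr 1; omega
  rw [this, Nat.mul_div_cancel _ (by norm_num)]

lemma tower_pos (i x : ℕ) (hx : 1 ≤ x) : 1 ≤ tower2 i x := by
  cases i with
  | zero => simpa [tower2] using hx
  | succ n => exact Nat.one_le_two_pow

theorem statement_10 (x : ℕ) (hx : 5 ≤ x) (i : ℕ) (hi : 1 ≤ i) :
    gfun^[i] x < tower2 (i + 1) x / 2 := by
  induction i with
  | zero => omega
  | succ n ih =>
    rcases Nat.eq_zero_or_pos n with hn | hn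
    · subst hn
      have ht : 1 ≤ 2 ^ x := Nat.one_le_two_pow
      have htower : tower2 2 x = 2 ^ (2 ^ x) := rfl
      rw [htower, pow_div_two _ ht]
      refine lt_of_lt_of_le (g_lt x hx) (Nat.pow_le_pow_right (by norm_num) ?_)
      have := key x hx
      omega
    · have ih' := ih hn
      set y := gfun^[n] x with hy
      have hy5 : 5 ≤ y := iter_ge x hx n
      set t := tower2 n x with htdef
      have ht1 : 1 ≤ t := tower_pos n x (by omega)
      have htower : tower2 (n + 1) x = 2 ^ t := rfl
      have hylt : y < 2 ^ (t - 1) := by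
        rwa [htower, pow_div_two _ ht1] at ih'
      have htower2 : tower2 (n + 2) x = 2 ^ (2 ^ t) := by
        show 2 ^ tower2 (n+1) x = _
        rw [htower]
      rw [Function.iterate_succ_apply', ← hy, htower2,
        pow_div_two _ (Nat.one_le_two_pow)]
      refine lt_of_lt_of_le (g_lt y hy5) (Nat.pow_le_pow_right (by norm_num) ?_)
      have h2 : 2 ^ t = 2 ^ (t - 1) * 2 := by
        rw [← pow_succ]; congr 1; omega
      omega

end PaperFO
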